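/- For the 3SAT-to-d-MDT reduction graph, in any spanning tree achieving worst delay at most 4, each variable tour x_j is connected to exactly one of x or x̄: connecting to both creates a cycle through x_j, x, x̄, t, and connecting to neither forces routing through a clause tour incurring delay at least 2 + 2/3 + 0 + 1 + 1 = 4 + 2/3 > 4. -/
import Mathlib


/-- A clause over `a` Boolean variables: three literals, each a variable index with a
polarity (`true` = the variable appears uncomplemented). -/
abbrev RClause (a : ℕ) := (Fin a × Bool) × (Fin a × Bool) × (Fin a × Bool)

/-- The tours of the d-MDT reduction graph: one per clause, one per variable, and the
three auxiliary tours x, x̄ and t. -/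
abbrev RV (a b : ℕ) := Fin b ⊕ (Fin a ⊕ Fin 3)

/-- The tour of clause `i`. -/
def cl {a b : ℕ} (i : Fin b) : RV a b := Sum.inl i
/-- The tour of variable `j`. -/
def vr {a b : ℕ} (j : Fin a) : RV a b := Sum.inr (Sum.inl j)
/-- The auxiliary tour x. -/
def vX (a b : ℕ) : RV a b := Sum.inr (Sum.inr 0)
/-- The auxiliary tour x̄. -/
def vXb (a b : ℕ) : RV a b := Sum.inr (Sum.inr 1)
/-- The auxiliary tour t, which carries the base station (at coordinate 1). -/
def vT (a b : ℕ) : RV a b := Sum.inr (Sum.inr 2)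

/-- Variable `j` occurs (as a literal) in clause `c`. -/
def occursIn {a : ℕ} (j : Fin a) (c : RClause a) : Prop :=
  c.1.1 = j ∨ c.2.1.1 = j ∨ c.2.2.1 = j

/-- Variable `j` occurs uncomplemented in clause `c`. -/
def occursPos {a : ℕ} (j : Fin a) (c : RClause a) : Prop :=
  c.1 = (j, true) ∨ c.2.1 = (j, true) ∨ c.2.2 = (j, true)

/-- Adjacency (meeting points) of the reduction graph: each clause tour meets the
tours of its three variables; each variable tour meets x and x̄; and t meets both x
and x̄. -/
def adjR {a b : ℕ} (C : Fin b → RClause a) : RV a b → RV a b → Prop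
  | Sum.inl i, Sum.inr (Sum.inl j) => occursIn j (C i)
  | Sum.inr (Sum.inl j), Sum.inl i => occursIn j (C i)
  | Sum.inr (Sum.inl _), Sum.inr (Sum.inr k) => k = 0 ∨ k = 1
  | Sum.inr (Sum.inr k), Sum.inr (Sum.inl _) => k = 0 ∨ k = 1
  | Sum.inr (Sum.inr k), Sum.inr (Sum.inr k') =>
      (k = 2 ∧ (k' = 0 ∨ k' = 1)) ∨ (k' = 2 ∧ (k = 0 ∨ k = 1))
  | _, _ => False

open Classical in
/-- Meeting-point coordinates of the reduction graph.  All tours have length 2.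
`posR C v w` is the coordinate on tour `v` of the meeting point with tour `w`:
on a clause tour the three meeting points are spaced 2/3 apart (coordinates 0, 2/3,
4/3); on a variable tour the meeting point with x is at 0 and with x̄ at 1 (distance
1 on each side), and a clause meeting point is co-located with x (coordinate 0) if
the variable occurs uncomplemented and with x̄ (coordinate 1) otherwise; on x and x̄
the meeting point with t is at 0 and all variable meeting points are at 1; on t the
meeting points with x and x̄ are both at 0 (the base station is at coordinate 1). -/
noncomputable def posR {a b : ℕ} (C : Fin b → RClause a) : RV a b → RV a b → ℝ
  | Sum.inl i, Sum.inr (Sum.inl j) =>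
      if (C i).1.1 = j then 0 else if (C i).2.1.1 = j then 2 / 3 else 4 / 3
  | Sum.inr (Sum.inl j), Sum.inl i => if occursPos j (C i) then 0 else 1
  | Sum.inr (Sum.inl _), Sum.inr (Sum.inr k) => if k = 0 then 0 else 1
  | Sum.inr (Sum.inr k), Sum.inr (Sum.inl _) => if k = 2 then 0 else 1
  | _, _ => 0

/-- Travel time from `p` to `q` on a tour of length 2 in the fixed (counterclockwise)
direction. -/
noncomputable def seg (p q : ℝ) : ℝ := 2 * Int.fract ((q - p) / 2)

/-- The three literals of each clause use pairwise distinct variables. -/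
def DistinctVars {a b : ℕ} (C : Fin b → RClause a) : Prop :=
  ∀ i, (C i).1.1 ≠ (C i).2.1.1 ∧ (C i).1.1 ≠ (C i).2.2.1 ∧ (C i).2.1.1 ≠ (C i).2.2.1

/-!
STATEMENT 15: For the 3SAT-to-d-MDT reduction graph, in any spanning tree achieving
worst delay at most 4, each variable tour x_j is connected to exactly one of x or x̄:
connecting to both creates a cycle through x_j, x, x̄, t, and connecting to neither
forces routing through a clause tour incurring delay at least
2 + 2/3 + 0 + 1 + 1 = 4 + 2/3 > 4.

The spanning tree is rooted at the base-station tour t; an (undirected) edge [u, w]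
belongs to the tree iff `parent u = w` or `parent w = u`.
-/
section
variable {a b : ℕ} (C : Fin b → RClause a)

lemma vr_ne_vT (j : Fin a) : vr j ≠ vT a b := by simp [vr, vT]
lemma cl_ne_vT (i : Fin b) : (cl i : RV a b) ≠ vT a b := by simp [cl, vT]
lemma vX_ne_vT : vX a b ≠ vT a b := by simp [vX, vT]
lemma vXb_ne_vT : vXb a b ≠ vT a b := by simp [vXb, vT]
lemma vX_ne_vXb : vX a b ≠ vXb a b := by simp [vX, vXb]

lemma adj_vr_cases {j : Fin a} {w : RV a b} (h : adjR C (vr j) w) :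
    w = vX a b ∨ w = vXb a b ∨ ∃ i, w = cl i ∧ occursIn j (C i) := by
  rcases w with i | j' | k
  · exact Or.inr (Or.inr ⟨i, rfl, h⟩)
  · simp [adjR, vr] at h
  · simp only [adjR, vr] at h
    rcases h with h | h
    · exact Or.inl (by simp [vX, h])
    · exact Or.inr (Or.inl (by simp [vXb, h]))

lemma adj_cl_cases {i : Fin b} {w : RV a b} (h : adjR C (cl i) w) :
    ∃ j, w = vr j ∧ occursIn j (C i) := by
  rcases w with i' | j | k
  · simp [adjR, cl] at h
  · exact ⟨j, rfl, h⟩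
  · simp [adjR, cl] at h

lemma adj_vX_cases {w : RV a b} (h : adjR C (vX a b) w) :
    w = vT a b ∨ ∃ j, w = vr j := by
  rcases w with i | j | k
  · simp [adjR, vX] at h
  · exact Or.inr ⟨j, rfl⟩
  · simp only [adjR, vX] at h
    rcases h with ⟨h, -⟩ | ⟨h, -⟩
    · exact absurd h (by decide)
    · exact Or.inl (by simp [vT, h])

lemma adj_vXb_cases {w : RV a b} (h : adjR C (vXb a b) w) :
    w = vT a b ∨ ∃ j, w = vr j := by
  rcases w with i | j | k
  · simp [adjR, vXb] at h
  · exact Or.inr ⟨j, rfl⟩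
  · simp only [adjR, vXb] at h
    rcases h with ⟨h, -⟩ | ⟨h, -⟩
    · exact absurd h (by decide)
    · exact Or.inl (by simp [vT, h])

lemma posR_vX_vr (j : Fin a) : posR C (vX a b) (vr j) = 1 := by simp [posR, vX, vr]
lemma posR_vXb_vr (j : Fin a) : posR C (vXb a b) (vr j) = 1 := by simp [posR, vXb, vr]
lemma posR_vX_vT : posR C (vX a b) (vT a b) = 0 := by simp [posR, vX, vT]
lemma posR_vXb_vT : posR C (vXb a b) (vT a b) = 0 := by simp [posR, vXb, vT]
lemma posR_vT_vX : posR C (vT a b) (vX a b) = 0 := by simp [posR, vT, vX]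
lemma posR_vT_vXb : posR C (vT a b) (vXb a b) = 0 := by simp [posR, vT, vXb]
lemma posR_vr_vX (j : Fin a) : posR C (vr j) (vX a b) = 0 := by simp [posR, vr, vX]
lemma posR_vr_vXb (j : Fin a) : posR C (vr j) (vXb a b) = 1 := by simp [posR, vr, vXb]

lemma posR_cl_mem (i : Fin b) (j : Fin a) :
    posR C (cl i) (vr j) = 0 ∨ posR C (cl i) (vr j) = 2/3 ∨ posR C (cl i) (vr j) = 4/3 := by
  simp only [posR, cl, vr]
  by_cases h1 : (C i).1.1 = j
  · simp [h1]
  by_cases h2 : (C i).2.1.1 = j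
  · simp [h1, h2]
  · simp [h1, h2]

lemma posR_cl_ne (i : Fin b) {j j' : Fin a} (hne : j ≠ j')
    (hj : occursIn j (C i)) (hj' : occursIn j' (C i)) :
    posR C (cl i) (vr j) ≠ posR C (cl i) (vr j') := by
  simp only [posR, cl, vr]
  by_cases h1 : (C i).1.1 = j <;> by_cases h1' : (C i).1.1 = j' <;>
    by_cases h2 : (C i).2.1.1 = j <;> by_cases h2' : (C i).2.1.1 = j' <;>
    simp_all [occursIn] <;> norm_num

lemma seg_nonneg (p q : ℝ) : 0 ≤ seg p q := by
  unfold seg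
  have := Int.fract_nonneg ((q - p) / 2)
  linarith

lemma seg_01 : seg 0 1 = 1 := by norm_num [seg, Int.fract]
lemma seg_10 : seg 1 0 = 1 := by norm_num [seg, Int.fract]
lemma seg_11 : seg 1 1 = 0 := by norm_num [seg, Int.fract]

lemma seg_ge23 {p q : ℝ} (hp : p = 0 ∨ p = 2/3 ∨ p = 4/3)
    (hq : q = 0 ∨ q = 2/3 ∨ q = 4/3) (hne : p ≠ q) : 2/3 ≤ seg p q := by
  rcases hp with rfl | rfl | rfl <;> rcases hq with rfl | rfl | rfl <;>
    first
      | exact absurd rfl hne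
      | norm_num [seg, Int.fract]

end


theorem stmt_15
    (a b : ℕ) (C : Fin b → RClause a) (hC : DistinctVars C)
    (parent : RV a b → RV a b) (g : RV a b → ℝ)
    (hroot : parent (vT a b) = vT a b)
    (hadj : ∀ v, v ≠ vT a b → adjR C v (parent v))
    (hspan : ∀ v, ∃ k, parent^[k] v = vT a b)
    (hgroot : g (vT a b) = 0)
    (hg : ∀ v, v ≠ vT a b → g v =
      seg (posR C (parent v) v)
        (if parent v = vT a b then 1 else posR C (parent v) (parent (parent v)))
        + g (parent v))
    (hWD : ∀ v, 2 + g v ≤ 4) :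
    ∀ j : Fin a,
      ((parent (vr j) = vX a b ∨ parent (vX a b) = vr j) ∧
        ¬ (parent (vr j) = vXb a b ∨ parent (vXb a b) = vr j)) ∨
      ((parent (vr j) = vXb a b ∨ parent (vXb a b) = vr j) ∧
        ¬ (parent (vr j) = vX a b ∨ parent (vX a b) = vr j)) := by
    -- no 2-cycles
  have no2 : ∀ u w : RV a b, parent u = w → parent w = u → u ≠ vT a b → w ≠ vT a b → False := by
    intro u w h1 h2 hu hw
    obtain ⟨k, hk⟩ := hspan u
    have hiter : ∀ m, parent^[m] u = u ∨ parent^[m] u = w := by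
      intro m
      induction m with
      | zero => exact Or.inl rfl
      | succ n ih =>
          rcases ih with h | h <;>
            simp [Function.iterate_succ_apply', h, h1, h2]
    rcases hiter k with h | h
    · exact hu (h.symm.trans hk)
    · exact hw (h.symm.trans hk)
  have step : ∀ (k : ℕ) (v : RV a b), parent^[k] v = vT a b → v ≠ vT a b →
      ∃ m, m + 1 = k ∧ parent^[m] (parent v) = vT a b := by
    intro k v hk hv
    cases k with
    | zero => exact absurd hk hv
    | succ m => exact ⟨m, rfl, by rwa [Function.iterate_succ_apply] at hk⟩
  -- the key induction: every variable vertex has delay ≥ 2 and parent in {x, x̄}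
  have key : ∀ k : ℕ, ∀ j : Fin a, parent^[k] (vr j) = vT a b →
      2 ≤ g (vr j) ∧ (parent (vr j) = vX a b ∨ parent (vr j) = vXb a b) := by
    intro k
    induction k using Nat.strong_induction_on with
    | _ k IH =>
    intro j hk
    obtain ⟨m, hmk, hk1⟩ := step k (vr j) hk (vr_ne_vT j)
    have hgv := hg (vr j) (vr_ne_vT j)
    rcases adj_vr_cases C (hadj (vr j) (vr_ne_vT j)) with hp | hp | ⟨i, hp, hocc⟩
    · -- parent (vr j) = vX
      refine ⟨?_, Or.inl hp⟩
      rw [hp] at hgv hk1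
      rw [if_neg vX_ne_vT, posR_vX_vr] at hgv
      have hgX := hg (vX a b) vX_ne_vT
      rcases adj_vX_cases C (hadj (vX a b) vX_ne_vT) with hX | ⟨j'', hX⟩
      · rw [hX, posR_vX_vT] at hgv
        rw [hX, if_pos rfl, posR_vT_vX, hgroot] at hgX
        rw [hgv, hgX, seg_10, seg_01]
        norm_num
      · rw [hX, posR_vX_vr] at hgv
        rw [hX, if_neg (vr_ne_vT j'')] at hgX
        obtain ⟨n, hnm, hk2⟩ := step m (vX a b) hk1 vX_ne_vT
        rw [hX] at hk2
        have h2 := (IH n (by omega) j'' hk2).1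
        have hs := seg_nonneg (posR C (vr j'') (vX a b)) (posR C (vr j'') (parent (vr j'')))
        rw [hgv, seg_11, hgX]
        linarith
    · -- parent (vr j) = vXb
      refine ⟨?_, Or.inr hp⟩
      rw [hp] at hgv hk1
      rw [if_neg vXb_ne_vT, posR_vXb_vr] at hgv
      have hgX := hg (vXb a b) vXb_ne_vT
      rcases adj_vXb_cases C (hadj (vXb a b) vXb_ne_vT) with hX | ⟨j'', hX⟩
      · rw [hX, posR_vXb_vT] at hgv
        rw [hX, if_pos rfl, posR_vT_vXb, hgroot] at hgX
        rw [hgv, hgX, seg_10, seg_01]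
        norm_num
      · rw [hX, posR_vXb_vr] at hgv
        rw [hX, if_neg (vr_ne_vT j'')] at hgX
        obtain ⟨n, hnm, hk2⟩ := step m (vXb a b) hk1 vXb_ne_vT
        rw [hX] at hk2
        have h2 := (IH n (by omega) j'' hk2).1
        have hs := seg_nonneg (posR C (vr j'') (vXb a b)) (posR C (vr j'') (parent (vr j'')))
        rw [hgv, seg_11, hgX]
        linarith
    · -- parent (vr j) = cl i : contradiction with the delay bound
      exfalso
      obtain ⟨j', hc, hocc'⟩ := adj_cl_cases C (hadj (cl i) (cl_ne_vT i))
      have hjj' : j ≠ j' := by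
        rintro rfl
        exact no2 (vr j) (cl i) hp hc (vr_ne_vT j) (cl_ne_vT i)
      rw [hp] at hgv hk1
      rw [if_neg (cl_ne_vT i), hc] at hgv
      have hgc := hg (cl i) (cl_ne_vT i)
      rw [hc, if_neg (vr_ne_vT j')] at hgc
      obtain ⟨n, hnm, hk2⟩ := step m (cl i) hk1 (cl_ne_vT i)
      rw [hc] at hk2
      have h2 := (IH n (by omega) j' hk2).1
      have hsc := seg_ge23 (posR_cl_mem C i j) (posR_cl_mem C i j')
        (posR_cl_ne C i hjj' hocc hocc')
      have hs0 := seg_nonneg (posR C (vr j') (cl i)) (posR C (vr j') (parent (vr j')))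
      have hW := hWD (vr j)
      linarith
  intro j
  obtain ⟨k, hk⟩ := hspan (vr j)
  obtain ⟨hg2, hpar⟩ := key k j hk
  rcases hpar with hp | hp
  · left
    refine ⟨Or.inl hp, ?_⟩
    rintro (h | h)
    · exact vX_ne_vXb (hp.symm.trans h)
    · have hgb := hg (vXb a b) vXb_ne_vT
      rw [h, if_neg (vr_ne_vT j), hp, posR_vr_vXb, posR_vr_vX, seg_10] at hgb
      have := hWD (vXb a b)
      linarith
  · right
    refine ⟨Or.inl hp, ?_⟩
    rintro (h | h)
    · exact vX_ne_vXb (h.symm.trans hp)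
    · have hgb := hg (vX a b) vX_ne_vT
      rw [h, if_neg (vr_ne_vT j), hp, posR_vr_vX, posR_vr_vXb, seg_01] at hgb
      have := hWD (vX a b)
      linarith
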